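/- arXiv:2305.08349 — 8 statements merged into one kernel-verified Lean document; each statement's English description precedes it below -/
import Mathlib

section
/- For every natural number N ≥ 1, there exist a unique finite set S of integers such that N = Σ_{i∈S} φ^i (where φ = (1+√5)/2) and S contains no two consecutive integers. -/
noncomputable def phi : ℝ := (1 + Real.sqrt 5) / 2

/-!
Existence: add `φ^0 = 1` repeatedly. To add `φ^j` when `j + 1` is present, merge the two terms
into `φ^(j+2)` and carry on upwards; this leaves every exponent below `j` untouched. When `j`
itself is present, split `2 φ^j = φ^(j+1) + φ^(j-2)`: carry `φ^(j+1)` upwards, then add `φ^(j-2)`.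
The recursion terminates because the number of exponents `≤ j + 1` strictly drops.

Uniqueness: without consecutive exponents, a sum of `φ^i` over exponents `i < m` stays below
`φ^m`, so the sum determines its largest exponent, and one peels exponents off from the top.
-/

open Finset

namespace BasePhi

def NoConsecutive (S : Finset ℤ) : Prop := ∀ i ∈ S, i + 1 ∉ S

lemma NoConsecutive.mono {S T : Finset ℤ} (hS : NoConsecutive S) (h : T ⊆ S) :
    NoConsecutive T :=
  fun i hi hi₁ => hS i (h hi) (h hi₁)

lemma NoConsecutive.add_two_notMem {S : Finset ℤ} {j : ℤ} (hS : NoConsecutive S)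
    (h : j + 1 ∈ S) : j + 2 ∉ S := by
  simpa [add_assoc] using hS (j + 1) h

lemma NoConsecutive.insert_of_sub_one_notMem_of_add_one_notMem {S : Finset ℤ} {j : ℤ}
    (hS : NoConsecutive S) (hpred : j - 1 ∉ S) (hsucc : j + 1 ∉ S) :
    NoConsecutive (insert j S) := by
  intro i hi hi₁
  rw [mem_insert] at hi hi₁
  rcases hi with rfl | hi
  · exact hsucc (hi₁.resolve_left (by omega))
  · rcases hi₁ with h | hi₁
    · exact hpred (by rwa [← h, add_sub_cancel_right])
    · exact hS i hi hi₁

lemma phi_eq_goldenRatio : phi = Real.goldenRatio := rfl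

lemma phi_zpow_add_two (j : ℤ) : phi ^ (j + 2) = phi ^ (j + 1) + phi ^ j := by
  simp only [phi_eq_goldenRatio, zpow_add₀ Real.goldenRatio_ne_zero, zpow_one, zpow_two]
  linear_combination Real.goldenRatio ^ j * Real.goldenRatio_sq

lemma phi_zpow_pred_add_zpow (j : ℤ) : phi ^ (j - 1) + phi ^ j = phi ^ (j + 1) := by
  have h := phi_zpow_add_two (j - 1)
  ring_nf at h ⊢
  linear_combination -h

lemma two_mul_phi_zpow (j : ℤ) : 2 * phi ^ j = phi ^ (j + 1) + phi ^ (j - 2) := by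
  have h₁ := phi_zpow_add_two (j - 2)
  have h₂ := phi_zpow_add_two (j - 1)
  ring_nf at h₁ h₂ ⊢
  linear_combination h₁ - h₂

lemma phi_zpow_pos (i : ℤ) : 0 < phi ^ i := zpow_pos Real.goldenRatio_pos i

lemma phi_zpow_le_zpow {i j : ℤ} (h : i ≤ j) : phi ^ i ≤ phi ^ j :=
  zpow_le_zpow_right₀ Real.one_lt_goldenRatio.le h

lemma NoConsecutive.exists_add_zpow_of_notMem {S : Finset ℤ} {j : ℤ} (hS : NoConsecutive S)
    (hj : j ∉ S) (hpred : j - 1 ∉ S) :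
    ∃ T, NoConsecutive T ∧ ∑ i ∈ T, phi ^ i = ∑ i ∈ S, phi ^ i + phi ^ j ∧
      ∀ i < j, (i ∈ T ↔ i ∈ S) := by
  by_cases hsucc : j + 1 ∈ S
  · obtain ⟨T, hT, hsum, hagree⟩ :=
      exists_add_zpow_of_notMem (S := S.erase (j + 1)) (j := j + 2)
        (hS.mono (erase_subset _ _)) (fun h => hS.add_two_notMem hsucc (mem_of_mem_erase h))
        (by simp [show j + 2 - 1 = j + 1 by ring])
    refine ⟨T, hT, ?_, fun i hi => ?_⟩
    · rw [hsum, ← add_sum_erase S _ hsucc, phi_zpow_add_two]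
      ring
    · rw [hagree i (by omega), mem_erase]
      exact and_iff_right (by omega)
  · refine ⟨insert j S, hS.insert_of_sub_one_notMem_of_add_one_notMem hpred hsucc,
      by rw [sum_insert hj, add_comm], fun i hi => ?_⟩
    rw [mem_insert, or_iff_right hi.ne]
termination_by (S.filter (j ≤ ·)).card
decreasing_by
  refine card_lt_card ((ssubset_iff_of_subset fun i hi => ?_).2 ⟨j + 1, ?_, ?_⟩)
  · simp only [mem_filter, mem_erase] at hi ⊢
    exact ⟨hi.1.2, by omega⟩
  · exact mem_filter.2 ⟨hsucc, by omega⟩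
  · simp

lemma NoConsecutive.exists_add_zpow {S : Finset ℤ} (hS : NoConsecutive S) (j : ℤ) :
    ∃ T, NoConsecutive T ∧ ∑ i ∈ T, phi ^ i = ∑ i ∈ S, phi ^ i + phi ^ j := by
  by_cases hj : j ∈ S
  · have hsucc : j + 1 ∉ S := hS j hj
    obtain ⟨T₁, hT₁, hsum₁, hagree⟩ :=
      exists_add_zpow_of_notMem (S := S.erase j) (j := j + 1)
        (hS.mono (erase_subset _ _)) (fun h => hsucc (mem_of_mem_erase h)) (by simp)
    obtain ⟨T, hT, hsum⟩ := exists_add_zpow hT₁ (j - 2)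
    refine ⟨T, hT, ?_⟩
    rw [hsum, hsum₁, ← add_sum_erase S _ hj]
    linear_combination -two_mul_phi_zpow j
  by_cases hsucc : j + 1 ∈ S
  · obtain ⟨T, hT, hsum, -⟩ := exists_add_zpow_of_notMem (S := S.erase (j + 1)) (j := j + 2)
      (hS.mono (erase_subset _ _)) (fun h => hS.add_two_notMem hsucc (mem_of_mem_erase h))
      (by simp [show j + 2 - 1 = j + 1 by ring])
    refine ⟨T, hT, ?_⟩
    rw [hsum, ← add_sum_erase S _ hsucc]
    linear_combination phi_zpow_add_two j
  by_cases hpred : j - 1 ∈ S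
  · obtain ⟨T, hT, hsum, -⟩ := exists_add_zpow_of_notMem (S := S.erase (j - 1)) (j := j + 1)
      (hS.mono (erase_subset _ _)) (fun h => hsucc (mem_of_mem_erase h))
      (fun h => hj (mem_of_mem_erase (by rwa [add_sub_cancel_right] at h)))
    refine ⟨T, hT, ?_⟩
    rw [hsum, ← add_sum_erase S _ hpred]
    linear_combination -phi_zpow_pred_add_zpow j
  exact ⟨insert j S, hS.insert_of_sub_one_notMem_of_add_one_notMem hpred hsucc,
    by rw [sum_insert hj, add_comm]⟩
termination_by (S.filter (· ≤ j + 1)).card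
decreasing_by
  refine card_lt_card ((ssubset_iff_of_subset fun i hi => ?_).2 ⟨j, ?_, ?_⟩)
  · simp only [mem_filter] at hi ⊢
    have := (hagree i (by omega)).1 hi.1
    exact ⟨mem_of_mem_erase this, by omega⟩
  · exact mem_filter.2 ⟨hj, by omega⟩
  · exact fun h => absurd (mem_filter.1 h).2 (by omega)

lemma NoConsecutive.sum_lt_zpow {S : Finset ℤ} (hS : NoConsecutive S) {m : ℤ}
    (hm : ∀ i ∈ S, i < m) : ∑ i ∈ S, phi ^ i < phi ^ m := by
  induction S using Finset.induction_on_max generalizing m with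
  | empty => simpa using phi_zpow_pos m
  | insert a s hlt ih =>
    have hs : ∀ i ∈ s, i < a - 1 := fun i hi =>
      lt_of_le_of_ne (by linarith [hlt i hi]) fun h =>
        hS i (mem_insert_of_mem hi) (by rw [h, sub_add_cancel]; exact mem_insert_self a s)
    calc ∑ i ∈ insert a s, phi ^ i
        = phi ^ a + ∑ i ∈ s, phi ^ i := sum_insert fun h => (hlt a h).false
      _ < phi ^ a + phi ^ (a - 1) := add_lt_add_right (ih (hS.mono (subset_insert a s)) hs) _
      _ = phi ^ (a + 1) := by rw [add_comm, phi_zpow_pred_add_zpow]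
      _ ≤ phi ^ m := phi_zpow_le_zpow (hm a (mem_insert_self a s))

lemma NoConsecutive.sum_lt_zpow_iff {S : Finset ℤ} (hS : NoConsecutive S) {m : ℤ} :
    ∑ i ∈ S, phi ^ i < phi ^ m ↔ ∀ i ∈ S, i < m := by
  refine ⟨fun h i hi => ?_, hS.sum_lt_zpow⟩
  by_contra! hmi
  exact h.not_ge <| (phi_zpow_le_zpow hmi).trans <|
    single_le_sum (fun k _ => (phi_zpow_pos k).le) hi

lemma NoConsecutive.eq_of_sum_eq {S T : Finset ℤ} (hS : NoConsecutive S) (hT : NoConsecutive T)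
    (h : ∑ i ∈ S, phi ^ i = ∑ i ∈ T, phi ^ i) : S = T := by
  induction S using Finset.induction_on_max generalizing T with
  | empty =>
    refine (eq_empty_of_forall_notMem fun i hi => ?_).symm
    have := single_le_sum (fun k _ => (phi_zpow_pos k).le) hi
    rw [sum_empty] at h
    linarith [phi_zpow_pos i]
  | insert a s hlt ih =>
    have hbound (m : ℤ) : (∀ i ∈ insert a s, i < m) ↔ ∀ i ∈ T, i < m := by
      rw [← hS.sum_lt_zpow_iff, ← hT.sum_lt_zpow_iff, h]
    obtain ⟨b, hb, hab⟩ : ∃ b ∈ T, a ≤ b := by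
      simpa using mt (hbound a).2 (by simp)
    have hba : b < a + 1 :=
      (hbound (a + 1)).1 (by simpa using fun i hi => (hlt i hi).trans (lt_add_one a)) b hb
    have haT : a ∈ T := by rwa [show a = b by omega]
    have hsum : ∑ i ∈ s, phi ^ i = ∑ i ∈ T.erase a, phi ^ i := by
      rw [← add_sum_erase T _ haT, sum_insert fun h => (hlt a h).false] at h
      exact add_left_cancel h
    rw [ih (hS.mono (subset_insert a s)) (hT.mono (erase_subset a T)) hsum, insert_erase haT]

lemma exists_noConsecutive_sum_eq_natCast (N : ℕ) :
    ∃ S, NoConsecutive S ∧ ∑ i ∈ S, phi ^ i = N := by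
  induction N with
  | zero => exact ⟨∅, fun i hi => absurd hi (notMem_empty i), by simp⟩
  | succ n ih =>
    obtain ⟨S, hS, hsum⟩ := ih
    obtain ⟨T, hT, hsumT⟩ := hS.exists_add_zpow 0
    exact ⟨T, hT, by rw [hsumT, hsum, zpow_zero, Nat.cast_succ]⟩

end BasePhi

theorem base_phi_expansion_exists_unique_general (N : ℕ) :
    ∃! S : Finset ℤ, (∀ i ∈ S, i + 1 ∉ S) ∧ (N : ℝ) = ∑ i ∈ S, phi ^ i := by
  obtain ⟨S, hS, hsum⟩ := BasePhi.exists_noConsecutive_sum_eq_natCast N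
  exact ⟨S, ⟨hS, hsum.symm⟩, fun T ⟨hT, hsumT⟩ =>
    BasePhi.NoConsecutive.eq_of_sum_eq hT hS (hsumT.symm.trans hsum.symm)⟩

/-- Every natural number `N ≥ 1` has a unique base phi expansion: a finite set `S ⊆ ℤ`
with no two consecutive integers such that `N = ∑_{i ∈ S} φ^i`. -/
theorem base_phi_expansion_exists_unique (N : ℕ) (hN : 1 ≤ N) :
    ∃! S : Finset ℤ, (∀ i ∈ S, i + 1 ∉ S) ∧ (N : ℝ) = ∑ i ∈ S, phi ^ i :=
  base_phi_expansion_exists_unique_general N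
end

section
/- If N is a natural number with base phi expansion N = Σ_{i∈S} φ^i where S ⊆ ℤ has no two consecutive integers, then N equals the ceiling of the sum of the nonnegative-exponent part: N = ⌈Σ_{i∈S, i≥0} φ^i⌉. -/
open Real goldenRatio

lemma phi_eq_goldenRatio : phi = φ := rfl

lemma goldenRatio_zpow_add_one (a : ℤ) : φ ^ (a + 1) = φ ^ a + φ ^ (a - 1) := by
  have h : φ ^ (a + 1) = φ ^ (a - 1) * φ ^ 2 := by
    rw [← zpow_natCast, ← zpow_add₀ goldenRatio_ne_zero]
    ring_nf
  rw [h, goldenRatio_sq, mul_add, mul_one, ← zpow_add_one₀ goldenRatio_ne_zero, sub_add_cancel,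
    add_comm]

lemma sum_goldenRatio_zpow_lt_zpow_add_one (T : Finset ℤ) (hcons : ∀ i ∈ T, i + 1 ∉ T) (m : ℤ)
    (hle : ∀ i ∈ T, i ≤ m) : ∑ i ∈ T, φ ^ i < φ ^ (m + 1) := by
  induction T using Finset.induction_on_max generalizing m with
  | empty => simpa using zpow_pos goldenRatio_pos (m + 1)
  | insert a T hlt ih =>
    have hgap : ∀ i ∈ T, i ≤ a - 2 := by
      intro i hi
      have hne : i ≠ a - 1 := by
        rintro rfl
        exact hcons (a - 1) (Finset.mem_insert_of_mem hi) (by simp)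
      have := hlt i hi
      omega
    have hT : ∑ i ∈ T, φ ^ i < φ ^ (a - 1) := by
      have := ih (fun i hi hi' => hcons i (Finset.mem_insert_of_mem hi)
        (Finset.mem_insert_of_mem hi')) (a - 2) hgap
      rwa [show a - 2 + 1 = a - 1 by ring] at this
    have haT : a ∉ T := fun ha => (hlt a ha).false
    calc ∑ i ∈ insert a T, φ ^ i = φ ^ a + ∑ i ∈ T, φ ^ i := Finset.sum_insert haT
      _ < φ ^ a + φ ^ (a - 1) := by gcongr
      _ = φ ^ (a + 1) := (goldenRatio_zpow_add_one a).symm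
      _ ≤ φ ^ (m + 1) := zpow_le_zpow_right₀ one_lt_goldenRatio.le
        (by have := hle a (Finset.mem_insert_self a T); omega)

/-- If `N = ∑_{i ∈ S} φ^i` is the base phi expansion of `N`, then `N` equals the ceiling
of the nonnegative-exponent part of the sum. -/
theorem base_phi_ceil_positive_part (N : ℕ) (S : Finset ℤ)
    (hcons : ∀ i ∈ S, i + 1 ∉ S)
    (hsum : (N : ℝ) = ∑ i ∈ S, phi ^ i) :
    (N : ℤ) = ⌈∑ i ∈ S.filter (fun i => 0 ≤ i), phi ^ i⌉ := by
  rw [phi_eq_goldenRatio] at hsum ⊢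
  set neg := S.filter (fun i => ¬ 0 ≤ i)
  rw [← Finset.sum_filter_add_sum_filter_not S (fun i => 0 ≤ i)] at hsum
  have hneg_nonneg : 0 ≤ ∑ i ∈ neg, φ ^ i :=
    Finset.sum_nonneg fun i _ => (zpow_pos goldenRatio_pos i).le
  have hneg_lt_one : ∑ i ∈ neg, φ ^ i < 1 := by
    have := sum_goldenRatio_zpow_lt_zpow_add_one neg
      (fun i hi hi' => hcons i (Finset.mem_filter.mp hi).1 (Finset.mem_filter.mp hi').1) (-1)
      (fun i hi => by have := (Finset.mem_filter.mp hi).2; omega)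
    simpa using this
  rw [eq_comm, Int.ceil_eq_iff]
  push_cast
  constructor <;> linarith
end

section
/- For a finite set S ⊆ ℤ of negative integers with no two consecutive integers, the sum Σ_{i∈S} φ^i is strictly less than 1. -/
/-!
Order the elements of `S` decreasingly. If `a` is the largest, the others are at most `a - 2`,
so by induction their sum is below `φ ^ (a - 1)`, and `φ ^ a + φ ^ (a - 1) = φ ^ (a + 1)`.
Hence a sum over a gap-two set with elements `≤ m` stays below `φ ^ (m + 1)`, and `m = -1`
gives the bound `1`. Only `φ + 1 ≤ φ ^ 2` is used, so the bound holds for every base `x ≥ φ`.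
-/

open Finset

section

variable {K : Type*} [Field K] [LinearOrder K] [IsStrictOrderedRing K] {x : K}

theorem zpow_add_zpow_sub_one_le_zpow_add_one (hx₀ : 0 < x) (hx : x + 1 ≤ x ^ 2) (a : ℤ) :
    x ^ a + x ^ (a - 1) ≤ x ^ (a + 1) := by
  have hx₀' : x ≠ 0 := hx₀.ne'
  calc x ^ a + x ^ (a - 1) = x ^ (a - 1) * (x + 1) := by
        rw [mul_add, mul_one, ← zpow_add_one₀ hx₀', sub_add_cancel]
    _ ≤ x ^ (a - 1) * x ^ 2 := mul_le_mul_of_nonneg_left hx (zpow_pos hx₀ _).le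
    _ = x ^ (a + 1) := by
        rw [← zpow_natCast, ← zpow_add₀ hx₀']
        ring_nf

theorem sum_zpow_lt_zpow_add_one (h1 : 1 ≤ x) (hx : x + 1 ≤ x ^ 2) (S : Finset ℤ) :
    ∀ m : ℤ, (∀ i ∈ S, i ≤ m) → (∀ i ∈ S, i + 1 ∉ S) → ∑ i ∈ S, x ^ i < x ^ (m + 1) := by
  have hx₀ : 0 < x := zero_lt_one.trans_le h1
  induction S using Finset.induction_on_max with
  | empty => exact fun m _ _ ↦ by simpa using zpow_pos hx₀ (m + 1)
  | insert a S hlt ih =>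
    intro m hle hcons
    have haS : a ∉ S := fun ha ↦ (hlt a ha).false
    have hgap : ∀ i ∈ S, i ≤ a - 2 := by
      intro i hi
      have hne : i + 1 ≠ a := fun h ↦ hcons i (mem_insert_of_mem hi) (h ▸ mem_insert_self a S)
      have := hlt i hi
      omega
    have hrest : ∑ i ∈ S, x ^ i < x ^ (a - 1) := by
      have := ih (a - 2) hgap fun i hi hi' ↦
        hcons i (mem_insert_of_mem hi) (mem_insert_of_mem hi')
      rwa [show a - 2 + 1 = a - 1 by ring] at this
    have ham : a ≤ m := hle a (mem_insert_self a S)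
    calc ∑ i ∈ insert a S, x ^ i = x ^ a + ∑ i ∈ S, x ^ i := sum_insert haS
      _ < x ^ a + x ^ (a - 1) := by gcongr
      _ ≤ x ^ (a + 1) := zpow_add_zpow_sub_one_le_zpow_add_one hx₀ hx a
      _ ≤ x ^ (m + 1) := zpow_le_zpow_right₀ h1 (by omega)

end

/-- For a finite set `S` of negative integers with no two consecutive integers,
`∑_{i ∈ S} φ^i < 1`. -/
theorem sum_neg_powers_lt_one (S : Finset ℤ)
    (hneg : ∀ i ∈ S, i < 0) (hcons : ∀ i ∈ S, i + 1 ∉ S) :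
    ∑ i ∈ S, phi ^ i < 1 := by
  have hphi : phi = Real.goldenRatio := rfl
  have h := sum_zpow_lt_zpow_add_one Real.one_lt_goldenRatio.le Real.goldenRatio_sq.ge S (-1)
    (fun i hi ↦ by have := hneg i hi; omega) hcons
  rwa [neg_add_cancel, zpow_zero, ← hphi] at h
end

section
/- For all n ≥ 1, L_{2n+1} + 1 = φ^{2n+1} + φ^{-(2n+2)} + Σ_{j=1}^{n} φ^{-(2j-1)}. -/
def lucas : ℕ → ℕ
  | 0 => 2
  | 1 => 1
  | n + 2 => lucas (n + 1) + lucas n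

lemma phi_pos : 0 < phi := by
  have := Real.sqrt_nonneg 5
  unfold phi; linarith

lemma phi_ne : phi ≠ 0 := ne_of_gt phi_pos

lemma phi_sq : phi ^ 2 = phi + 1 := by
  have h : Real.sqrt 5 ^ 2 = 5 := Real.sq_sqrt (by norm_num)
  unfold phi; nlinarith [h]

lemma phi_inv : phi⁻¹ = phi - 1 := by
  have h := phi_sq
  have hne := phi_ne
  field_simp
  nlinarith [h]

lemma lucas_real (m : ℕ) : (lucas m : ℝ) = phi ^ m + (-phi⁻¹) ^ m := by
  induction m using Nat.strong_induction_on with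
  | _ m ih =>
    match m with
    | 0 => simp [lucas]; norm_num
    | 1 =>
      have h := phi_sq
      simp only [lucas, pow_one, phi_inv]
      norm_num
    | (k+2) =>
      have h1 := ih (k+1) (by omega)
      have h0 := ih k (by omega)
      have h := phi_sq
      have hne := phi_ne
      have hpsi : (-phi⁻¹) ^ 2 = (-phi⁻¹) + 1 := by
        rw [phi_inv]
        nlinarith [h]
      show ((lucas (k+1) + lucas k : ℕ) : ℝ) = _
      push_cast
      rw [h1, h0]
      have e1 : phi ^ (k+2) = phi ^ (k+1) + phi ^ k := by
        have : phi ^ (k+2) = phi ^ k * phi ^ 2 := by ring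
        rw [this, h]; ring
      have e2 : (-phi⁻¹) ^ (k+2) = (-phi⁻¹) ^ (k+1) + (-phi⁻¹) ^ k := by
        have : (-phi⁻¹) ^ (k+2) = (-phi⁻¹) ^ k * (-phi⁻¹) ^ 2 := by ring
        rw [this, hpsi]; ring
      rw [e1, e2]; ring

lemma zp (m : ℕ) : phi ^ (-(m : ℤ)) = (phi⁻¹) ^ m := by
  rw [zpow_neg, zpow_natCast, inv_pow]

/-- The base phi expansion `10^{2n+1}·(10)^n 01` of `L_{2n+1}+1`:
`L_{2n+1} + 1 = φ^{2n+1} + ∑_{j=1}^{n} φ^{-(2j-1)} + φ^{-(2n+2)}`. -/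
theorem lucas_odd_succ_base_phi (n : ℕ) (hn : 1 ≤ n) :
    (lucas (2 * n + 1) : ℝ) + 1 =
      phi ^ (2 * n + 1) +
      (∑ k ∈ Finset.range n, phi ^ (-(2 * (k : ℤ) + 1))) +
      phi ^ (-(2 * (n : ℤ) + 2)) := by
  have hz : ∀ k : ℕ, phi ^ (-(2 * (k : ℤ) + 1)) = (phi⁻¹) ^ (2 * k + 1) := by
    intro k
    have : -(2 * (k : ℤ) + 1) = -((2 * k + 1 : ℕ) : ℤ) := by push_cast; ring
    rw [this, zp]
  have hz2 : ∀ k : ℕ, phi ^ (-(2 * (k : ℤ) + 2)) = (phi⁻¹) ^ (2 * k + 2) := by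
    intro k
    have : -(2 * (k : ℤ) + 2) = -((2 * k + 2 : ℕ) : ℤ) := by push_cast; ring
    rw [this, zp]
  simp only [hz, hz2]
  have h := phi_sq
  have hne := phi_ne
  have hp := phi_inv
  have hinv2 : phi⁻¹ ^ 2 = 2 - phi := by
    rw [hp]; nlinarith [h]
  induction n with
  | zero => omega
  | succ m ihm =>
    rcases Nat.eq_or_lt_of_le hn with h1 | h1
    · -- m = 0
      have hm : m = 0 := by omega
      subst hm
      have hl : lucas (2 * 1 + 1) = 4 := by decide
      rw [hl, Finset.sum_range_one]
      norm_num [hp]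
      linear_combination (-(phi^2 - 2*phi + 5)) * h
    · have hm : 1 ≤ m := by omega
      have IH := ihm hm
      rw [Finset.sum_range_succ]
      have hlr : (lucas (2 * (m+1) + 1) : ℝ) = (lucas (2*m+2) : ℝ) + (lucas (2*m+1) : ℝ) := by
        have : 2 * (m+1) + 1 = (2*m+1) + 2 := by ring
        rw [this]
        show ((lucas (2*m+2) + lucas (2*m+1) : ℕ) : ℝ) = _
        push_cast; ring
      have heven : (lucas (2*m+2) : ℝ) = phi ^ (2*m+2) + (phi⁻¹) ^ (2*m+2) := by
        rw [lucas_real]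
        have hev : Even (2*m+2) := ⟨m+1, by ring⟩
        rw [hev.neg_pow]
      have e3 : phi⁻¹ ^ (2*m+1) = phi⁻¹ ^ (2*m+2) * phi := by
        have e : phi⁻¹ ^ (2*m+2) = phi⁻¹ ^ (2*m+1) * phi⁻¹ := by ring
        rw [e, mul_assoc, inv_mul_cancel₀ hne, mul_one]
      have key : phi ^ (2*m+2) + (phi⁻¹)^(2*m+2) +
          (phi ^ (2*m+1) + (phi⁻¹)^(2*m+2)) =
          phi ^ (2*(m+1)+1) + (phi⁻¹)^(2*m+1) + (phi⁻¹)^(2*(m+1)+2) := by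
        have e1 : phi ^ (2*(m+1)+1) = phi ^ (2*m+1) * phi ^ 2 := by ring
        have e2 : (phi⁻¹)^(2*(m+1)+2) = (phi⁻¹)^(2*m+2) * (phi⁻¹ ^ 2) := by ring
        have e4 : phi ^ (2*m+2) = phi ^ (2*m+1) * phi := by ring
        rw [e1, e2, e3, e4]
        linear_combination (-(phi^(2*m+1))) * h - (phi⁻¹^(2*m+2)) * hinv2
      rw [hlr]
      calc (lucas (2*m+2) : ℝ) + (lucas (2*m+1) : ℝ) + 1
          = phi ^ (2*m+2) + (phi⁻¹)^(2*m+2) + ((lucas (2*m+1) : ℝ) + 1) := by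
            rw [heven]; ring
        _ = phi ^ (2*m+2) + (phi⁻¹)^(2*m+2) +
            (phi ^ (2*m+1) + (∑ k ∈ Finset.range m, (phi⁻¹) ^ (2*k+1)) + (phi⁻¹)^(2*m+2)) := by
            rw [IH]
        _ = (phi ^ (2*m+2) + (phi⁻¹)^(2*m+2) + (phi ^ (2*m+1) + (phi⁻¹)^(2*m+2))) +
            (∑ k ∈ Finset.range m, (phi⁻¹) ^ (2*k+1)) := by ring
        _ = (phi ^ (2*(m+1)+1) + (phi⁻¹)^(2*m+1) + (phi⁻¹)^(2*(m+1)+2)) +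
            (∑ k ∈ Finset.range m, (phi⁻¹) ^ (2*k+1)) := by rw [key]
        _ = phi ^ (2*(m+1)+1) +
            ((∑ k ∈ Finset.range m, (phi⁻¹) ^ (2*k+1)) + (phi⁻¹)^(2*m+1)) +
            (phi⁻¹)^(2*(m+1)+2) := by ring
end

section
/- For all n ≥ 1, L_{2n+2} − 1 = Σ_{k=0}^{n} φ^{2k+1} + φ^{-(2n+2)}, corresponding to the base phi expansion (10)^{n+1}·0^{2n+1}1. -/
noncomputable def psi : ℝ := (1 - Real.sqrt 5) / 2

lemma sqrt5_sq : Real.sqrt 5 * Real.sqrt 5 = 5 :=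
  Real.mul_self_sqrt (by norm_num)

lemma psi_sq : psi ^ 2 = psi + 1 := by
  unfold psi
  nlinarith [sqrt5_sq]

lemma phi_mul_psi : phi * psi = -1 := by
  unfold phi psi
  nlinarith [sqrt5_sq]

lemma lucas_eq (m : ℕ) : (lucas m : ℝ) = phi ^ m + psi ^ m := by
  induction m using Nat.twoStepInduction with
  | zero => simp [lucas]; norm_num
  | one => simp [lucas, phi, psi]
  | more k ih1 ih2 =>
    have : (lucas (k + 2) : ℝ) = (lucas (k + 1) : ℝ) + (lucas k : ℝ) := by
      simp [lucas]
    rw [this, ih1, ih2]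
    have h1 : phi ^ (k + 2) = phi ^ k * phi ^ 2 := by ring
    have h2 : psi ^ (k + 2) = psi ^ k * psi ^ 2 := by ring
    rw [h1, h2, phi_sq, psi_sq]
    ring

lemma sum_phi (n : ℕ) : ∑ k ∈ Finset.range n, phi ^ (2 * k + 1) = phi ^ (2 * n) - 1 := by
  induction n with
  | zero => simp
  | succ m ih =>
    rw [Finset.sum_range_succ, ih]
    have : phi ^ (2 * (m + 1)) = phi ^ (2 * m) * phi ^ 2 := by ring
    rw [this, phi_sq]
    ring

/-- The base phi expansion `(10)^{n+1}·0^{2n+1}1` of `L_{2n+2}-1`: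
`L_{2n+2} - 1 = ∑_{k=0}^{n} φ^{2k+1} + φ^{-(2n+2)}`. -/
theorem lucas_even_pred_base_phi (n : ℕ) (hn : 1 ≤ n) :
    (lucas (2 * n + 2) : ℝ) - 1 =
      (∑ k ∈ Finset.range (n + 1), phi ^ (2 * k + 1)) +
      phi ^ (-(2 * (n : ℤ) + 2)) := by
  rw [sum_phi, lucas_eq]
  have hne : phi ≠ 0 := ne_of_gt phi_pos
  have hz : phi ^ (-(2 * (n : ℤ) + 2)) = (phi ^ (2 * n + 2) : ℝ)⁻¹ := by
    rw [← zpow_natCast phi (2 * n + 2)]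
    rw [← zpow_neg]
    push_cast
    ring
  have hpsi : psi ^ (2 * n + 2) = (phi ^ (2 * n + 2))⁻¹ := by
    have h : psi = -(phi⁻¹) := by
      field_simp
      nlinarith [phi_mul_psi]
    rw [h]
    rw [show 2 * n + 2 = 2 * (n + 1) by ring, pow_mul, pow_mul]
    rw [neg_pow, ← inv_pow]
    norm_num
  rw [hz, ← hpsi]
  ring
end

section
/- Let C(n) be the word over {3,4,5} defined recursively by C(3)=3, C(4)=4, C(5)=5 and C(n+2) = C(n)·C(n−1)·C(n) for n ≥ 4. Then for all n ≥ 0, C(2n+4) = κ^n(4) and C(2n+5) = κ^n(5), where κ(3)=5, κ(4)=434, κ(5)=545. -/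
/-- The substitution `κ` on `{3,4,5}` (encoded as `Fin 3` with `0 ↔ 3`, `1 ↔ 4`, `2 ↔ 5`):
`κ(3)=5, κ(4)=434, κ(5)=545`. -/
def kappa : List (Fin 3) → List (Fin 3) :=
  fun w => w.flatMap fun i => if i = 0 then [2] else if i = 1 then [1, 0, 1] else [2, 1, 2]

/-- The coding words of the canonical splittings of Lucas intervals:
`C(3)=3, C(4)=4, C(5)=5` and `C(m+2) = C(m) C(m-1) C(m)`. -/
def C : ℕ → List (Fin 3)
  | 0 => []
  | 1 => []
  | 2 => []
  | 3 => [0]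
  | 4 => [1]
  | 5 => [2]
  | n + 6 => C (n + 4) ++ C (n + 3) ++ C (n + 4)

lemma kappa_append (a b : List (Fin 3)) : kappa (a ++ b) = kappa a ++ kappa b := by
  simp [kappa, List.flatMap_append]

lemma kappa_iter_append (n : ℕ) (a b : List (Fin 3)) :
    kappa^[n] (a ++ b) = kappa^[n] a ++ kappa^[n] b := by
  induction n generalizing a b with
  | zero => rfl
  | succ m ih => simp only [Function.iterate_succ_apply, kappa_append, ih]

lemma aux (n : ℕ) : C (2 * n + 3) = kappa^[n] [0] ∧ C (2 * n + 4) = kappa^[n] [1] ∧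
    C (2 * n + 5) = kappa^[n] [2] := by
  induction n with
  | zero => simp [C]
  | succ n ih =>
    obtain ⟨h3, h4, h5⟩ := ih
    refine ⟨?_, ?_, ?_⟩
    · rw [show 2 * (n + 1) + 3 = 2 * n + 5 from by ring, h5,
        Function.iterate_succ_apply, show kappa [0] = [2] from by simp [kappa]]
    · rw [show 2 * (n + 1) + 4 = (2 * n) + 6 from by ring,
        show C ((2 * n) + 6) = C (2 * n + 4) ++ C (2 * n + 3) ++ C (2 * n + 4) from rfl,
        h3, h4, Function.iterate_succ_apply, show kappa [1] = [1] ++ [0] ++ [1] from by simp [kappa],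
        kappa_iter_append, kappa_iter_append]
    · rw [show 2 * (n + 1) + 5 = (2 * n + 1) + 6 from by ring,
        show C ((2 * n + 1) + 6) = C (2 * n + 5) ++ C (2 * n + 4) ++ C (2 * n + 5) from rfl,
        h4, h5, Function.iterate_succ_apply, show kappa [2] = [2] ++ [1] ++ [2] from by simp [kappa],
        kappa_iter_append, kappa_iter_append]

/-- For all `n ≥ 0`, `C(2n+4) = κ^n(4)` and `C(2n+5) = κ^n(5)`. -/
theorem canonical_splitting_code (n : ℕ) :
    C (2 * n + 4) = kappa^[n] [1] ∧ C (2 * n + 5) = kappa^[n] [2] := by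
  exact ⟨(aux n).2.1, (aux n).2.2⟩
end

section
/- There do not exist a real number α > 1 and integers p, q, r such that the sequence of first differences of (p⌊nα⌋ + qn + r)_{n≥1} equals the fixed point of the substitution a ↦ aab, b ↦ ab on a two-letter integer alphabet {a,b} with a ≠ b. -/
/-! If `p⌊nα⌋ + qn + r` had difference sequence `x_H`, then `p ≠ 0`, so the difference sequence
of `⌊nα⌋` would be `x_H` with its two letters recoded as `⌊α⌋` and `⌊α⌋ + 1`, in some order.
Summing differences over the prefixes `aa` and `aabaabab` of `x_H` then determines `⌊3α⌋` and
`⌊9α⌋`: if `a ↦ ⌊α⌋` they force `fract α < 1/3 ≤ fract α`, and if `a ↦ ⌊α⌋ + 1` they force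
`2/3 ≤ fract α < 2/3`. In terms of floors, both contradict `3⌊3α⌋ ≤ ⌊9α⌋ < 3⌊3α⌋ + 3`. -/

/-- The substitution `h : a ↦ aab, b ↦ ab` on `{a,b}`, encoded on `Bool` with
`false ↔ a`, `true ↔ b`. -/
def hsub : List Bool → List Bool :=
  fun w => w.flatMap fun x => if x then [false, true] else [false, false, true]

/-- The fixed point `x_H` of `h` starting with `a` (= `false`), given letterwise:
`h^[k]([a])` are nested prefixes of `x_H`. -/
def xH : ℕ → Bool := fun n => (hsub^[n + 1] [false]).getD n true

open Finset

section Floor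

variable {R : Type*} [CommRing R] [LinearOrder R] [FloorRing R]

theorem Int.floor_add_sub_floor_eq_or [IsStrictOrderedRing R] (x y : R) :
    ⌊x + y⌋ - ⌊x⌋ = ⌊y⌋ ∨ ⌊x + y⌋ - ⌊x⌋ = ⌊y⌋ + 1 := by
  have := Int.le_floor_add x y
  have := Int.le_floor_add_floor x y
  omega

theorem Int.floor_natCast_mul_mem_Ico [IsStrictOrderedRing R] {n : ℕ} (hn : 0 < n) (y : R) :
    ⌊(n : R) * y⌋ ∈ Set.Ico (n * ⌊y⌋) (n * ⌊y⌋ + n) := by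
  constructor
  · rw [Int.le_floor]
    push_cast
    exact mul_le_mul_of_nonneg_left (Int.floor_le y) n.cast_nonneg
  · rw [Int.floor_lt]
    push_cast
    rw [← mul_add_one]
    exact mul_lt_mul_of_pos_left (Int.lt_floor_add_one y) (Nat.cast_pos.mpr hn)

def floorDiff (α : R) (n : ℕ) : ℤ := ⌊((n : R) + 2) * α⌋ - ⌊((n : R) + 1) * α⌋

theorem floorDiff_eq_or [IsStrictOrderedRing R] (α : R) (n : ℕ) :
    floorDiff α n = ⌊α⌋ ∨ floorDiff α n = ⌊α⌋ + 1 := by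
  have h := Int.floor_add_sub_floor_eq_or (((n : R) + 1) * α) α
  rwa [show ((n : R) + 1) * α + α = ((n : R) + 2) * α by ring] at h

theorem floor_succ_mul_eq_add_sum_floorDiff (α : R) (N : ℕ) :
    ⌊((N : R) + 1) * α⌋ = ⌊α⌋ + ∑ n ∈ range N, floorDiff α n := by
  rw [eq_sum_range_sub (fun k : ℕ => ⌊((k : R) + 1) * α⌋) N]
  push_cast
  congr 1
  · simp
  · refine sum_congr rfl fun n _ => ?_
    rw [floorDiff, add_assoc, one_add_one_eq_two]

end Floor

theorem sum_range_ite_eq_card_filter (w : ℕ → Bool) (u v : ℤ) (N : ℕ) :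
    ∑ n ∈ range N, (if w n then v else u) =
      (N - #{n ∈ range N | w n}) * u + #{n ∈ range N | w n} * v := by
  have hcard : (#{n ∈ range N | ¬w n} : ℤ) = N - #{n ∈ range N | w n} := by
    have := card_filter_add_card_filter_not (s := range N) (fun n => w n = true)
    rw [card_range] at this
    omega
  rw [sum_ite, sum_const, sum_const, nsmul_eq_mul, nsmul_eq_mul, hcard]
  ring

theorem eq_ite_of_mul_add_eq_ite {d : ℕ → ℤ} {w : ℕ → Bool} {p q a b : ℤ} (hab : a ≠ b)
    (h : ∀ n, p * d n + q = if w n = false then a else b) {i j : ℕ} (hi : w i = false)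
    (hj : w j = true) :
    d i ≠ d j ∧ ∀ n, d n = if w n then d j else d i := by
  have hdi : p * d i + q = a := by simpa [hi] using h i
  have hdj : p * d j + q = b := by simpa [hj] using h j
  have hp : p ≠ 0 := by rintro rfl; simp at hdi hdj; omega
  refine ⟨fun hij => hab (by rw [← hdi, ← hdj, hij]), fun n => ?_⟩
  have hn := h n
  cases hw : w n <;> simp only [hw, Bool.false_eq_true, if_true, if_false, reduceCtorEq] at hn ⊢
  · exact mul_left_cancel₀ hp (by linarith)
  · exact mul_left_cancel₀ hp (by linarith)

theorem xH_zero : xH 0 = false := by decide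

theorem xH_two : xH 2 = true := by decide

theorem card_filter_xH_range_two : #{n ∈ range 2 | xH n} = 0 := by decide +kernel

theorem card_filter_xH_range_eight : #{n ∈ range 8 | xH n} = 3 := by decide +kernel

/-- No generalized Beatty sequence `(p⌊nα⌋ + qn + r)_{n ≥ 1}` with `α > 1` has first
difference sequence equal to the fixed point `x_H` of `a ↦ aab, b ↦ ab` on a
two-letter integer alphabet `{a, b}` with `a ≠ b`. -/
theorem no_gbs_with_delta_xH :
    ¬ ∃ (α : ℝ) (p q r a b : ℤ), 1 < α ∧ a ≠ b ∧
      ∀ n : ℕ,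
        (p * ⌊((n : ℝ) + 2) * α⌋ + q * ((n : ℤ) + 2) + r) -
          (p * ⌊((n : ℝ) + 1) * α⌋ + q * ((n : ℤ) + 1) + r) =
        (if xH n = false then a else b) := by
  rintro ⟨α, p, q, r, a, b, -, hab, H⟩
  have hcode (n : ℕ) : p * floorDiff α n + q = if xH n = false then a else b := by
    rw [← H n, floorDiff]
    ring
  obtain ⟨hd02, hd⟩ := eq_ite_of_mul_add_eq_ite hab hcode xH_zero xH_two
  have hsum (N : ℕ) : ⌊((N : ℝ) + 1) * α⌋ = ⌊α⌋ + (N - #{n ∈ range N | xH n}) * floorDiff α 0 +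
      #{n ∈ range N | xH n} * floorDiff α 2 := by
    rw [floor_succ_mul_eq_add_sum_floorDiff, sum_congr rfl fun n _ => hd n,
      sum_range_ite_eq_card_filter, add_assoc]
  have h3 : ⌊3 * α⌋ = ⌊α⌋ + 2 * floorDiff α 0 := by
    simpa [card_filter_xH_range_two, show (2 : ℝ) + 1 = 3 by norm_num] using hsum 2
  have h9 : ⌊3 * (3 * α)⌋ = ⌊α⌋ + 5 * floorDiff α 0 + 3 * floorDiff α 2 := by
    simpa [card_filter_xH_range_eight, ← mul_assoc, show (8 : ℝ) + 1 = 3 * 3 by norm_num]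
      using hsum 8
  obtain ⟨h9_lo, h9_hi⟩ := Int.floor_natCast_mul_mem_Ico three_pos (3 * α)
  push_cast at h9_lo h9_hi
  rcases floorDiff_eq_or α 0, floorDiff_eq_or α 2 with ⟨h0 | h0, h2 | h2⟩ <;> omega
end

section
/- Let x_F be the Fibonacci word, i.e. the fixed point of the substitution f(a)=aba, f(b)=ab. Then the fixed point of the substitution h(a)=aab, h(b)=ab equals a·x_F, and the fixed point of the substitution g(a)=baa, g(b)=ba equals b·x_F. -/
/-- The substitution `f : a ↦ aba, b ↦ ab` (square of the Fibonacci substitution),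
encoded on `Bool` with `false ↔ a`, `true ↔ b`. -/
def fsub : List Bool → List Bool :=
  fun w => w.flatMap fun x => if x then [false, true] else [false, true, false]

/-- The substitution `g : a ↦ baa, b ↦ ba`. -/
def gsub : List Bool → List Bool :=
  fun w => w.flatMap fun x => if x then [true, false] else [true, false, false]

lemma fsub_append (x y : List Bool) : fsub (x ++ y) = fsub x ++ fsub y := by
  simp [fsub]

lemma fsub_iter_append (k : ℕ) : ∀ x y : List Bool,
    fsub^[k] (x ++ y) = fsub^[k] x ++ fsub^[k] y := by
  induction k with
  | zero => simp
  | succ k ih =>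
      intro x y
      simp only [Function.iterate_succ_apply, fsub_append, ih]

lemma conj_g_step (w : List Bool) : [false] ++ gsub w = fsub w ++ [false] := by
  induction w with
  | nil => rfl
  | cons x t ih =>
      cases x <;> simp [fsub, gsub] at ih ⊢ <;> simpa using ih

lemma conj_h_step (w : List Bool) : [false, true] ++ hsub w = fsub w ++ [false, true] := by
  induction w with
  | nil => rfl
  | cons x t ih =>
      cases x <;> simp [fsub, hsub] at ih ⊢ <;> simpa using ih

def uword : ℕ → List Bool
  | 0 => []
  | k + 1 => fsub^[k] [false] ++ uword k

def vword : ℕ → List Bool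
  | 0 => []
  | k + 1 => fsub^[k] [false, true] ++ vword k

lemma conj_g (k : ℕ) : ∀ w : List Bool,
    uword k ++ gsub^[k] w = fsub^[k] w ++ uword k := by
  induction k with
  | zero => simp [uword]
  | succ k ih =>
      intro w
      calc uword (k+1) ++ gsub^[k+1] w
          = fsub^[k] [false] ++ (uword k ++ gsub^[k] (gsub w)) := by
            simp [uword, Function.iterate_succ_apply]
        _ = fsub^[k] [false] ++ (fsub^[k] (gsub w) ++ uword k) := by rw [ih]
        _ = fsub^[k] ([false] ++ gsub w) ++ uword k := by
            rw [fsub_iter_append]; simp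
        _ = fsub^[k] (fsub w ++ [false]) ++ uword k := by rw [conj_g_step]
        _ = fsub^[k+1] w ++ uword (k+1) := by
            rw [fsub_iter_append]
            simp [uword, Function.iterate_succ_apply]

lemma conj_h (k : ℕ) : ∀ w : List Bool,
    vword k ++ hsub^[k] w = fsub^[k] w ++ vword k := by
  induction k with
  | zero => simp [vword]
  | succ k ih =>
      intro w
      calc vword (k+1) ++ hsub^[k+1] w
          = fsub^[k] [false, true] ++ (vword k ++ hsub^[k] (hsub w)) := by
            simp [vword, Function.iterate_succ_apply]
        _ = fsub^[k] [false, true] ++ (fsub^[k] (hsub w) ++ vword k) := by rw [ih]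
        _ = fsub^[k] ([false, true] ++ hsub w) ++ vword k := by
            rw [fsub_iter_append]; simp
        _ = fsub^[k] (fsub w ++ [false, true]) ++ vword k := by rw [conj_h_step]
        _ = fsub^[k+1] w ++ vword (k+1) := by
            rw [fsub_iter_append]
            simp [vword, Function.iterate_succ_apply]

lemma f_iter_b (k : ℕ) : fsub^[k] [true] = uword k ++ [true] := by
  induction k with
  | zero => rfl
  | succ k ih =>
      have : fsub^[k+1] [true] = fsub^[k] [false] ++ fsub^[k] [true] := by
        rw [Function.iterate_succ_apply]
        show fsub^[k] ([false] ++ [true]) = _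
        rw [fsub_iter_append]
      rw [this, ih, uword]; simp

lemma f_iter_a (k : ℕ) : fsub^[k] [false] = vword k ++ [false] := by
  induction k with
  | zero => rfl
  | succ k ih =>
      have : fsub^[k+1] [false] = fsub^[k] [false, true] ++ fsub^[k] [false] := by
        rw [Function.iterate_succ_apply]
        show fsub^[k] ([false, true] ++ [false]) = _
        rw [fsub_iter_append]
      rw [this, ih, vword]; simp

lemma g_iter_b (k : ℕ) : gsub^[k] [true] = true :: uword k := by
  have h := conj_g k [true]
  rw [f_iter_b] at h
  have : uword k ++ gsub^[k] [true] = uword k ++ (true :: uword k) := by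
    rw [h]; simp
  exact List.append_cancel_left this

lemma h_iter_a (k : ℕ) : hsub^[k] [false] = false :: vword k := by
  have h := conj_h k [false]
  rw [f_iter_a] at h
  have : vword k ++ hsub^[k] [false] = vword k ++ (false :: vword k) := by
    rw [h]; simp
  exact List.append_cancel_left this

lemma fsub_len (w : List Bool) : 2 * w.length ≤ (fsub w).length := by
  induction w with
  | nil => simp [fsub]
  | cons x t ih => cases x <;> simp [fsub] at ih ⊢ <;> omega

lemma f_iter_len (k : ℕ) : k + 1 ≤ (fsub^[k] [false]).length := by
  induction k with
  | zero => simp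
  | succ k ih =>
      have h2 := fsub_len (fsub^[k] [false])
      have : fsub^[k+1] [false] = fsub (fsub^[k] [false]) := by
        rw [Function.iterate_succ_apply']
      rw [this]; omega

/-- The Fibonacci word `x_F`, the fixed point of `f` (starting with `a`), letterwise. -/
def xF : ℕ → Bool := fun n => (fsub^[n + 1] [false]).getD n true

/-- The fixed point of `g`, which starts with `b`, letterwise. -/
def xG : ℕ → Bool := fun n => (gsub^[n + 1] [true]).getD n false

/-- Berstel–Séébold: the fixed point of `h` is `a·x_F` and the fixed point of `g`
is `b·x_F`, where `x_F` is the Fibonacci word (fixed point of `f`). -/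
theorem fixed_points_of_g_h :
    xH 0 = false ∧ xG 0 = true ∧ ∀ n : ℕ, xH (n + 1) = xF n ∧ xG (n + 1) = xF n := by
  refine ⟨by simp [xH, hsub], by simp [xG, gsub], fun n => ?_⟩
  have hlen : n < (fsub^[n + 1] [false]).length := by
    have := f_iter_len (n + 1); omega
  constructor
  · have hv : vword (n + 2) = fsub^[n + 1] [false] ++ (fsub^[n + 1] [true] ++ vword (n + 1)) := by
      have : fsub^[n + 1] [false, true] = fsub^[n + 1] [false] ++ fsub^[n + 1] [true] := by
        have := fsub_iter_append (n + 1) [false] [true]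
        simpa using this
      simp [vword, this]
    show (hsub^[n + 2] [false]).getD (n + 1) true = xF n
    rw [h_iter_a]
    show (vword (n + 2)).getD n true = xF n
    rw [hv, List.getD_append _ _ _ _ hlen]
    rfl
  · have hu : uword (n + 2) = fsub^[n + 1] [false] ++ uword (n + 1) := rfl
    show (gsub^[n + 2] [true]).getD (n + 1) false = xF n
    rw [g_iter_b]
    show (uword (n + 2)).getD n false = xF n
    rw [hu, List.getD_append _ _ _ _ hlen]
    show (fsub^[n + 1] [false]).getD n false = (fsub^[n + 1] [false]).getD n true
    rw [List.getD_eq_getElem _ _ hlen, List.getD_eq_getElem _ _ hlen]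
end
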